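/- Let k_{p3} > k_{p4} > 0 and h > 0, and set ℬ := [h(k_{p3}−k_{p4}), h(k_{p3}+k_{p4})]. Given reals z₃, y₁, y₂ (where y₁ and y₂ are the affine quantities y₁ = (z₂ + h·u₁)/h + z₃ and y₂ = z₁/h² + (z₂ + h·u₁)/h + z₃ for some data z₁, z₂, u₁), the value z̄₃ := z₃ + proj_{[proj_{−ℬ}(−y₁), proj_{ℬ}(−y₁)]}(−y₂) is the unique solution of the inclusion z̄₃ ∈ z₃ − h·k_{p3}·sgn(y₂ − z₃ + z̄₃) − h·k_{p4}·sgn(y₁ − z₃ + z̄₃). -/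

import Mathlib

/-- Set-valued signum: `{1}` if positive, `{-1}` if negative, `[-1,1]` at zero. -/
noncomputable def sgnSet (w : ℝ) : Set ℝ :=
  if 0 < w then {1} else if w < 0 then {-1} else Set.Icc (-1) 1

/-- Projection onto the closed interval `[c,d]` (for `c ≤ d`): `max c (min d x)`. -/
noncomputable def proj (c d x : ℝ) : ℝ := max c (min d x)

lemma one_mem_sgnSet {x : ℝ} (h : 0 ≤ x) : (1:ℝ) ∈ sgnSet x := by
  unfold sgnSet
  split_ifs with h1 h2
  · rfl
  · linarith
  · constructor <;> norm_num

lemma neg_one_mem_sgnSet {x : ℝ} (h : x ≤ 0) : (-1:ℝ) ∈ sgnSet x := by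
  unfold sgnSet
  split_ifs with h1 h2
  · linarith
  · rfl
  · constructor <;> norm_num

lemma mem_sgnSet_zero {s : ℝ} (h1 : -1 ≤ s) (h2 : s ≤ 1) : s ∈ sgnSet (0:ℝ) := by
  unfold sgnSet
  norm_num
  exact ⟨h1, h2⟩

lemma sgnSet_bounds {x s : ℝ} (h : s ∈ sgnSet x) : -1 ≤ s ∧ s ≤ 1 := by
  unfold sgnSet at h
  split_ifs at h with h1 h2
  · simp only [Set.mem_singleton_iff] at h; subst h; norm_num
  · simp only [Set.mem_singleton_iff] at h; subst h; norm_num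
  · exact ⟨h.1, h.2⟩

lemma sgnSet_mono {x y s t : ℝ} (hxy : x < y) (hs : s ∈ sgnSet x) (ht : t ∈ sgnSet y) :
    s ≤ t := by
  rcases lt_trichotomy x 0 with hx | hx | hx
  · have hsv : s = -1 := by
      unfold sgnSet at hs; split_ifs at hs with h1 h2
      · linarith
      · simpa using hs
    rw [hsv]; exact (sgnSet_bounds ht).1
  · have hy : 0 < y := by linarith
    have htv : t = 1 := by
      unfold sgnSet at ht; split_ifs at ht with h1 <;> simp_all
    rw [htv]; exact (sgnSet_bounds hs).2
  · have hsv : s = 1 := by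
      unfold sgnSet at hs; split_ifs at hs with h1 <;> simp_all
    have hy : 0 < y := by linarith
    have htv : t = 1 := by
      unfold sgnSet at ht; split_ifs at ht with h1 <;> simp_all
    rw [hsv, htv]

lemma uniq_lemma {A B : ℝ} (hA : 0 < A) (hB : 0 < B) {b a v w : ℝ}
    (hv : ∃ s₁ ∈ sgnSet (v - b), ∃ s₂ ∈ sgnSet (v - a), v = -(A*s₁) - B*s₂)
    (hw : ∃ s₁ ∈ sgnSet (w - b), ∃ s₂ ∈ sgnSet (w - a), w = -(A*s₁) - B*s₂) :
    v = w := by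
  obtain ⟨s1, hs1, s2, hs2, hveq⟩ := hv
  obtain ⟨t1, ht1, t2, ht2, hweq⟩ := hw
  rcases lt_trichotomy v w with hlt | heq | hgt
  · have h1 : s1 ≤ t1 := sgnSet_mono (by linarith) hs1 ht1
    have h2 : s2 ≤ t2 := sgnSet_mono (by linarith) hs2 ht2
    nlinarith
  · exact heq
  · have h1 : t1 ≤ s1 := sgnSet_mono (by linarith) ht1 hs1
    have h2 : t2 ≤ s2 := sgnSet_mono (by linarith) ht2 hs2
    nlinarith

lemma key_lemma {A B : ℝ} (hB : 0 < B) (hAB : B < A) (a b : ℝ) :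
    ∃ s₁ ∈ sgnSet (proj (proj (-(A+B)) (-(A-B)) a) (proj (A-B) (A+B) a) b - b),
      ∃ s₂ ∈ sgnSet (proj (proj (-(A+B)) (-(A-B)) a) (proj (A-B) (A+B) a) b - a),
        proj (proj (-(A+B)) (-(A-B)) a) (proj (A-B) (A+B) a) b = -(A*s₁) - B*s₂ := by
  have hA : 0 < A := by linarith
  have hBne : B ≠ 0 := ne_of_gt hB
  have hAne : A ≠ 0 := ne_of_gt hA
  set L := proj (-(A+B)) (-(A-B)) a with hLdef
  set U := proj (A-B) (A+B) a with hUdef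
  set w := proj L U b with hwdef
  have hL1 : -(A+B) ≤ L := le_max_left _ _
  have hL2 : L ≤ -(A-B) := max_le (by linarith) (min_le_left _ _)
  have hU1 : A-B ≤ U := le_max_left _ _
  have hU2 : U ≤ A+B := max_le (by linarith) (min_le_left _ _)
  have hLU : L ≤ U := by linarith
  have hw1 : L ≤ w := le_max_left _ _
  have hw2 : w ≤ U := max_le hLU (min_le_left _ _)
  rcases lt_trichotomy b w with hbw | hbw | hbw
  · -- b < w : hence w = L
    have hbL : b ≤ L := by
      by_contra hc
      push_neg at hc
      have h1 : w ≤ max L b :=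
        max_le (le_max_left _ _) ((min_le_right U b).trans (le_max_right _ _))
      rw [max_eq_right hc.le] at h1
      linarith
    have hwL : w = L := by
      rw [hwdef]; unfold proj
      exact max_eq_left ((min_le_right _ _).trans hbL)
    refine ⟨1, one_mem_sgnSet (by linarith), (-w - A)/B, ?_, by field_simp; try ring⟩
    rcases le_total a (-(A+B)) with h1 | h1
    · have hLv : L = -(A+B) := by
        rw [hLdef]; unfold proj
        rw [min_eq_right (by linarith : a ≤ -(A-B)), max_eq_left h1]
      have hs : (-w - A)/B = 1 := by rw [hwL, hLv]; field_simp; ring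
      rw [hs]
      exact one_mem_sgnSet (by rw [hwL, hLv]; linarith)
    · rcases le_total a (-(A-B)) with h2 | h2
      · have hLv : L = a := by
          rw [hLdef]; unfold proj
          rw [min_eq_right h2, max_eq_right h1]
        have hz : w - a = 0 := by rw [hwL, hLv]; ring
        rw [hz]
        apply mem_sgnSet_zero
        · rw [le_div_iff₀ hB]; rw [hwL, hLv]; linarith
        · rw [div_le_one hB]; rw [hwL, hLv]; linarith
      · have hLv : L = -(A-B) := by
          rw [hLdef]; unfold proj
          rw [min_eq_left h2, max_eq_right (by linarith)]
        have hs : (-w - A)/B = -1 := by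
          rw [hwL, hLv]; field_simp; try ring
        rw [hs]
        exact neg_one_mem_sgnSet (by rw [hwL, hLv]; linarith)
  · -- b = w
    have hzb : w - b = 0 := by rw [hbw]; ring
    rcases lt_trichotomy a w with haw | haw | haw
    · -- a < w : s₁ = (-w - B)/A, s₂ = 1
      have hwub : w ≤ A - B := by
        rcases le_total a (A-B) with h | h
        · have hUv : U = A - B := by
            rw [hUdef]; unfold proj
            rw [min_eq_right (by linarith : a ≤ A+B), max_eq_left h]
          rw [← hUv]; exact hw2
        · have : U ≤ a := max_le h (min_le_right _ _)
          linarith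
      refine ⟨(-w - B)/A, ?_, 1, one_mem_sgnSet (by linarith), by field_simp; ring⟩
      rw [hzb]
      apply mem_sgnSet_zero
      · rw [le_div_iff₀ hA]; linarith
      · rw [div_le_one hA]; linarith
    · -- a = w
      have hza : w - a = 0 := by rw [haw]; ring
      refine ⟨max (-1) (min 1 (-w/A)), ?_, (-w - A * (max (-1) (min 1 (-w/A))))/B, ?_, by field_simp; try ring⟩
      · rw [hzb]
        exact mem_sgnSet_zero (le_max_left _ _) (max_le (by norm_num) (min_le_left _ _))
      · rw [hza]
        rcases le_total (-w) A with h | h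
        · rcases le_total (-A) (-w) with h' | h'
          · have hs1 : max (-1) (min 1 (-w/A)) = -w/A := by
              rw [min_eq_right (by rw [div_le_one hA]; linarith),
                max_eq_right (by rw [le_div_iff₀ hA]; linarith)]
            rw [hs1]
            have : (-w - A * (-w/A))/B = 0 := by field_simp; try ring
            rw [this]
            apply mem_sgnSet_zero <;> norm_num
          · -- -w ≤ -A, i.e. A ≤ w
            have hwA : A ≤ w := by linarith
            have hs1 : max (-1) (min 1 (-w/A)) = -1 := by
              rw [min_eq_right (by rw [div_le_one hA]; linarith),
                max_eq_left (by rw [div_le_iff₀ hA]; linarith)]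
            rw [hs1]
            apply mem_sgnSet_zero
            · rw [le_div_iff₀ hB]; linarith
            · rw [div_le_one hB]; linarith
        · -- A ≤ -w, i.e. w ≤ -A
          have hs1 : max (-1) (min 1 (-w/A)) = 1 := by
            rw [min_eq_left (by rw [le_div_iff₀ hA]; linarith),
              max_eq_right (by norm_num)]
          rw [hs1]
          apply mem_sgnSet_zero
          · rw [le_div_iff₀ hB]; linarith
          · rw [div_le_one hB]; linarith
    · -- w < a : s₁ = (-w + B)/A, s₂ = -1
      have hwlb : -(A-B) ≤ w := by
        rcases le_total (-(A-B)) a with h | h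
        · have : min (-(A-B)) a = -(A-B) := min_eq_left h
          have : -(A-B) ≤ L := by
            rw [hLdef]; unfold proj; rw [this]; exact le_max_right _ _
          linarith
        · have : a ≤ L := by
            rw [hLdef]; unfold proj; rw [min_eq_right h]; exact le_max_right _ _
          linarith
      refine ⟨(-w + B)/A, ?_, -1, neg_one_mem_sgnSet (by linarith), by field_simp; try ring⟩
      rw [hzb]
      apply mem_sgnSet_zero
      · rw [le_div_iff₀ hA]; linarith
      · rw [div_le_one hA]; linarith
  · -- w < b : hence w = U
    have hUb : U ≤ b := by
      by_contra hc
      push_neg at hc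
      have hmin : min U b = b := min_eq_right hc.le
      have : b ≤ w := by rw [hwdef]; unfold proj; rw [hmin]; exact le_max_right _ _
      linarith
    have hwU : w = U := by
      rw [hwdef]; unfold proj
      rw [min_eq_left hUb]; exact max_eq_right hLU
    refine ⟨-1, neg_one_mem_sgnSet (by linarith), (-w + A)/B, ?_, by field_simp; try ring⟩
    rcases le_total (A+B) a with h1 | h1
    · have hUv : U = A+B := by
        rw [hUdef]; unfold proj
        rw [min_eq_left h1, max_eq_right (by linarith)]
      have hs : (-w + A)/B = -1 := by rw [hwU, hUv]; field_simp; try ring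
      rw [hs]
      exact neg_one_mem_sgnSet (by rw [hwU, hUv]; linarith)
    · rcases le_total (A-B) a with h2 | h2
      · have hUv : U = a := by
          rw [hUdef]; unfold proj
          rw [min_eq_right h1, max_eq_right h2]
        have hz : w - a = 0 := by rw [hwU, hUv]; ring
        rw [hz]
        apply mem_sgnSet_zero
        · rw [le_div_iff₀ hB]; rw [hwU, hUv]; linarith
        · rw [div_le_one hB]; rw [hwU, hUv]; linarith
      · have hUv : U = A-B := by
          rw [hUdef]; unfold proj
          rw [min_eq_right (by linarith : a ≤ A+B), max_eq_left h2]
        have hs : (-w + A)/B = 1 := by rw [hwU, hUv]; field_simp; try ring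
        rw [hs]
        exact one_mem_sgnSet (by rw [hwU, hUv]; linarith)

theorem stmt_7 (kp3 kp4 h z1 z2 z3 u1 : ℝ)
    (hk : kp4 < kp3) (hk4 : 0 < kp4) (hh : 0 < h)
    (y1 y2 : ℝ)
    (hy1 : y1 = (z2 + h * u1) / h + z3)
    (hy2 : y2 = z1 / h^2 + (z2 + h * u1) / h + z3) :
    let zbar3 := z3 + proj (proj (-(h * (kp3 + kp4))) (-(h * (kp3 - kp4))) (-y1))
        (proj (h * (kp3 - kp4)) (h * (kp3 + kp4)) (-y1)) (-y2)
    (∃ s₁ ∈ sgnSet (y2 - z3 + zbar3), ∃ s₂ ∈ sgnSet (y1 - z3 + zbar3),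
        zbar3 = z3 - h * kp3 * s₁ - h * kp4 * s₂) ∧
    (∀ w, (∃ s₁ ∈ sgnSet (y2 - z3 + w), ∃ s₂ ∈ sgnSet (y1 - z3 + w),
        w = z3 - h * kp3 * s₁ - h * kp4 * s₂) → w = zbar3) := by
  intro zbar3
  set A := h * kp3 with hAdef
  set B := h * kp4 with hBdef
  have hB : 0 < B := mul_pos hh hk4
  have hA : 0 < A := mul_pos hh (by linarith)
  have hAB : B < A := by
    rw [hAdef, hBdef]
    exact mul_lt_mul_of_pos_left hk hh
  have e1 : h * (kp3 + kp4) = A + B := by rw [hAdef, hBdef]; ring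
  have e2 : h * (kp3 - kp4) = A - B := by rw [hAdef, hBdef]; ring
  have hz : zbar3 = z3 + proj (proj (-(A+B)) (-(A-B)) (-y1)) (proj (A-B) (A+B) (-y1)) (-y2) := by
    show z3 + _ = _
    rw [e1, e2]
  obtain ⟨s1, hs1, s2, hs2, heq⟩ := key_lemma hB hAB (-y1) (-y2)
  set W := proj (proj (-(A+B)) (-(A-B)) (-y1)) (proj (A-B) (A+B) (-y1)) (-y2) with hWdef
  have hzbar : zbar3 = z3 + W := hz
  have arg1 : y2 - z3 + zbar3 = W - (-y2) := by rw [hzbar]; ring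
  have arg2 : y1 - z3 + zbar3 = W - (-y1) := by rw [hzbar]; ring
  constructor
  · refine ⟨s1, ?_, s2, ?_, ?_⟩
    · rw [arg1]; exact hs1
    · rw [arg2]; exact hs2
    · rw [hzbar, heq]; ring
  · rintro v ⟨t1, ht1, t2, ht2, hveq⟩
    have hv' : ∃ s₁ ∈ sgnSet ((v - z3) - (-y2)), ∃ s₂ ∈ sgnSet ((v - z3) - (-y1)),
        v - z3 = -(A*s₁) - B*s₂ := by
      refine ⟨t1, ?_, t2, ?_, by rw [hveq]; ring⟩
      · have : (v - z3) - (-y2) = y2 - z3 + v := by ring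
        rw [this]; exact ht1
      · have : (v - z3) - (-y1) = y1 - z3 + v := by ring
        rw [this]; exact ht2
    have hw' : ∃ s₁ ∈ sgnSet (W - (-y2)), ∃ s₂ ∈ sgnSet (W - (-y1)),
        W = -(A*s₁) - B*s₂ := ⟨s1, hs1, s2, hs2, heq⟩
    have := uniq_lemma hA hB hv' hw'
    rw [hzbar]
    linarith
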